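/- Let w be a positive non-decreasing weight function with diverging W and α_c(w) = 0. Then for any δ > 0 and γ > 0, the series ∑ₙ 1 / w(γ · W⁻¹(W(n)+δ)) converges. -/

import Mathlib

/-!
Since `α_c(w) = 0`, pick `α ∈ (0, δ/2)` with `I_α(w) < ∞`. The integrand
`g(x) = 1/w(W⁻¹(W(x)+α))` is antitone and integrable, so `∑ g(n) < ∞` and `x g(x) → 0`.
Let `y = W⁻¹(W(n)+δ) ≥ n`, `z = γ y` and `z' = W⁻¹(W(z)+α)`. As `1/w ≤ g(z)` beyond `z'`,
`W(n) + δ = W(y) ≤ W(z) + α + y g(z)`, where `y g(z) = z g(z) / γ → 0`. Hence eventually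
`W(z) ≥ W(n) + α`, i.e. `γ y ≥ W⁻¹(W(n)+α)`, and the `n`-th term is at most `g(n)`.
-/

open MeasureTheory Filter Topology Set
open scoped ENNReal NNReal

noncomputable section

/-- Extension of a weight sequence to the reals: `w(t) = w(⌊t⌋)` (and `w 0` for `t < 0`). -/
def wext (w : ℕ → ℝ) (t : ℝ) : ℝ := w ⌊t⌋₊

/-- `W(t) = ∫₀ᵗ du / w(u)`. -/
def Wfun (v : ℝ → ℝ) (t : ℝ) : ℝ := ∫ u in (0:ℝ)..t, (v u)⁻¹

/-- `I_α(w) = ∫₀^∞ dx / w(W⁻¹(W(x)+α))`, valued in `[0,∞]`. -/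
def Ia (v : ℝ → ℝ) (Winv : ℝ → ℝ) (α : ℝ) : ℝ≥0∞ :=
  ∫⁻ x in Ioi (0:ℝ), ENNReal.ofReal (v (Winv (Wfun v x + α)))⁻¹

/-- The critical parameter `α_c(w) = inf {α ≥ 0 : I_α(w) < ∞} ∈ [0,∞]` (inf ∅ = ∞). -/
def alphac (v : ℝ → ℝ) (Winv : ℝ → ℝ) : ℝ≥0∞ :=
  sInf (ENNReal.ofReal '' {α : ℝ | 0 < α ∧ Ia v Winv α < ⊤})

lemma AntitoneOn.integrableOn_of_lintegral_lt_top {f : ℝ → ℝ} {s : Set ℝ}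
    (anti : AntitoneOn f s) (hs : MeasurableSet s) (nonneg : ∀ x ∈ s, 0 ≤ f x)
    (h : ∫⁻ x in s, ENNReal.ofReal (f x) < ⊤) : IntegrableOn f s :=
  (lintegral_ofReal_ne_top_iff_integrable
    (aemeasurable_restrict_of_antitoneOn hs anti).aestronglyMeasurable
    ((ae_restrict_iff' hs).2 (ae_of_all _ nonneg))).1 h.ne

/-- `(x/2) f(x) ≤ ∫_{x/2}^x f`, a difference of two partial integrals with the same limit. -/
lemma AntitoneOn.tendsto_mul_of_integrableOn_Ioi {f : ℝ → ℝ} (anti : AntitoneOn f (Ioi 0))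
    (nonneg : ∀ x ∈ Ioi 0, 0 ≤ f x) (hf : IntegrableOn f (Ioi 0)) :
    Tendsto (fun x => x * f x) atTop (𝓝 0) := by
  have hhalf : Tendsto (fun x : ℝ => x / 2) atTop atTop := tendsto_id.atTop_div_const two_pos
  have hdiff : Tendsto (fun x => (∫ u in (0:ℝ)..x, f u) - ∫ u in (0:ℝ)..x / 2, f u) atTop
      (𝓝 0) := by
    simpa using (intervalIntegral_tendsto_integral_Ioi 0 hf tendsto_id).sub
      (intervalIntegral_tendsto_integral_Ioi 0 hf hhalf)
  refine squeeze_zero' (eventually_atTop.2 ⟨1, fun x hx => ?_⟩)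
    (eventually_atTop.2 ⟨1, fun x hx => ?_⟩) (by simpa using hdiff.const_mul 2)
  · exact mul_nonneg (by linarith) (nonneg x (mem_Ioi.2 (by linarith)))
  · have hii : ∀ a b : ℝ, 0 ≤ a → 0 ≤ b → IntervalIntegrable f volume a b := fun a b ha hb =>
      intervalIntegrable_iff.2 (hf.mono_set fun u hu => (le_min ha hb).trans_lt hu.1)
    rw [intervalIntegral.integral_interval_sub_left (hii 0 x le_rfl (by linarith))
      (hii 0 (x / 2) le_rfl (by linarith))]
    have := intervalIntegral.integral_mono_on (by linarith) intervalIntegrable_const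
      (hii (x / 2) x (by linarith) (by linarith))
      fun u hu => anti (mem_Ioi.2 (by linarith [hu.1])) (mem_Ioi.2 (by linarith)) hu.2
    rw [intervalIntegral.integral_const, smul_eq_mul] at this
    linarith

lemma monotone_wext {w : ℕ → ℝ} (hw : Monotone w) : Monotone (wext w) :=
  fun _ _ hst => hw (Nat.floor_mono hst)

section Wfun

variable {v : ℝ → ℝ}

lemma intervalIntegrable_inv_of_monotone (hv : Monotone v) (hv0 : ∀ t, 0 < v t) (a b : ℝ) :
    IntervalIntegrable (fun u => (v u)⁻¹) volume a b :=
  Antitone.intervalIntegrable fun _ _ hst => inv_anti₀ (hv0 _) (hv hst)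

lemma Wfun_add_integral (hv : Monotone v) (hv0 : ∀ t, 0 < v t) (a b : ℝ) :
    Wfun v a + ∫ u in a..b, (v u)⁻¹ = Wfun v b :=
  intervalIntegral.integral_add_adjacent_intervals
    (intervalIntegrable_inv_of_monotone hv hv0 0 a) (intervalIntegrable_inv_of_monotone hv hv0 a b)

lemma Wfun_strictMono (hv : Monotone v) (hv0 : ∀ t, 0 < v t) : StrictMono (Wfun v) := by
  intro s t hst
  rw [← Wfun_add_integral hv hv0 s t, lt_add_iff_pos_right]
  exact intervalIntegral.intervalIntegral_pos_of_pos_on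
    (intervalIntegrable_inv_of_monotone hv hv0 s t) (fun u _ => inv_pos.2 (hv0 u)) hst

lemma Wfun_zero : Wfun v 0 = 0 := intervalIntegral.integral_same

lemma Wfun_nonneg (hv : Monotone v) (hv0 : ∀ t, 0 < v t) {t : ℝ} (ht : 0 ≤ t) :
    0 ≤ Wfun v t :=
  Wfun_zero (v := v) ▸ (Wfun_strictMono hv hv0).monotone ht

lemma Wfun_le_add_div (hv : Monotone v) (hv0 : ∀ t, 0 < v t) {s t : ℝ} (hs : 0 ≤ s)
    (ht : 0 ≤ t) : Wfun v t ≤ Wfun v s + t / v s := by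
  rcases le_total t s with hts | hst
  · have := (Wfun_strictMono hv hv0).monotone hts
    have : 0 ≤ t / v s := div_nonneg ht (hv0 s).le
    linarith
  · have hint : ∫ u in s..t, (v u)⁻¹ ≤ (t - s) * (v s)⁻¹ := by
      simpa using intervalIntegral.integral_mono_on hst
        (intervalIntegrable_inv_of_monotone hv hv0 s t) intervalIntegrable_const
        fun u hu => inv_anti₀ (hv0 s) (hv hu.1)
    have : (t - s) * (v s)⁻¹ ≤ t / v s := by
      rw [← div_eq_mul_inv]
      exact div_le_div_of_nonneg_right (by linarith) (hv0 s).le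
    linarith [Wfun_add_integral hv hv0 s t]

variable {Winv : ℝ → ℝ}

lemma Winv_nonneg (hv : Monotone v) (hv0 : ∀ t, 0 < v t)
    (hWinv : ∀ y, 0 ≤ y → Wfun v (Winv y) = y) {y : ℝ} (hy : 0 ≤ y) : 0 ≤ Winv y :=
  (Wfun_strictMono hv hv0).le_iff_le.1 (by rwa [hWinv y hy, Wfun_zero])

lemma Winv_le_Winv (hv : Monotone v) (hv0 : ∀ t, 0 < v t)
    (hWinv : ∀ y, 0 ≤ y → Wfun v (Winv y) = y) {y₁ y₂ : ℝ} (hy₁ : 0 ≤ y₁) (h : y₁ ≤ y₂) :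
    Winv y₁ ≤ Winv y₂ :=
  (Wfun_strictMono hv hv0).le_iff_le.1 (by rwa [hWinv y₁ hy₁, hWinv y₂ (hy₁.trans h)])

lemma Winv_Wfun (hv : Monotone v) (hv0 : ∀ t, 0 < v t)
    (hWinv : ∀ y, 0 ≤ y → Wfun v (Winv y) = y) {t : ℝ} (ht : 0 ≤ t) : Winv (Wfun v t) = t :=
  (Wfun_strictMono hv hv0).injective (hWinv _ (Wfun_nonneg hv hv0 ht))

lemma antitoneOn_inv_Winv_Wfun_add (hv : Monotone v) (hv0 : ∀ t, 0 < v t)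
    (hWinv : ∀ y, 0 ≤ y → Wfun v (Winv y) = y) {α : ℝ} (hα : 0 ≤ α) :
    AntitoneOn (fun x => (v (Winv (Wfun v x + α)))⁻¹) (Ici 0) := by
  intro s hs t _ hst
  refine inv_anti₀ (hv0 _) (hv (Winv_le_Winv hv hv0 hWinv ?_ ?_))
  · linarith [Wfun_nonneg hv hv0 hs]
  · linarith [(Wfun_strictMono hv hv0).monotone hst]

lemma Wfun_le_Wfun_add_add_div (hv : Monotone v) (hv0 : ∀ t, 0 < v t)
    (hWinv : ∀ y, 0 ≤ y → Wfun v (Winv y) = y) {α y z : ℝ} (hα : 0 ≤ α) (hy : 0 ≤ y)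
    (hz : 0 ≤ z) : Wfun v y ≤ Wfun v z + α + y / v (Winv (Wfun v z + α)) := by
  have hWz : 0 ≤ Wfun v z + α := by linarith [Wfun_nonneg hv hv0 hz]
  have := Wfun_le_add_div hv hv0 (Winv_nonneg hv hv0 hWinv hWz) hy
  rwa [hWinv _ hWz] at this

lemma inv_le_inv_Winv_Wfun_add (hv : Monotone v) (hv0 : ∀ t, 0 < v t)
    (hWinv : ∀ y, 0 ≤ y → Wfun v (Winv y) = y) {α x z : ℝ} (hα : 0 ≤ α) (hx : 0 ≤ x)
    (hz : 0 ≤ z) (h : Wfun v x + α ≤ Wfun v z) :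
    (v z)⁻¹ ≤ (v (Winv (Wfun v x + α)))⁻¹ := by
  have hle := Winv_le_Winv hv hv0 hWinv (by linarith [Wfun_nonneg hv hv0 hx]) h
  rw [Winv_Wfun hv hv0 hWinv hz] at hle
  exact inv_anti₀ (hv0 _) (hv hle)

lemma exists_Ia_lt_top_of_alphac_eq_zero (h : alphac v Winv = 0) {ε : ℝ} (hε : 0 < ε) :
    ∃ α, 0 < α ∧ α < ε ∧ Ia v Winv α < ⊤ := by
  have : alphac v Winv < ENNReal.ofReal ε := h ▸ ENNReal.ofReal_pos.2 hε
  obtain ⟨_, ⟨α, ⟨hα, hI⟩, rfl⟩, hαε⟩ := sInf_lt_iff.1 this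
  exact ⟨α, hα, (ENNReal.ofReal_lt_ofReal_iff hε).1 hαε, hI⟩

lemma integrableOn_inv_Winv_Wfun_add (hv : Monotone v) (hv0 : ∀ t, 0 < v t)
    (hWinv : ∀ y, 0 ≤ y → Wfun v (Winv y) = y) {α : ℝ} (hα : 0 ≤ α)
    (hI : Ia v Winv α < ⊤) :
    IntegrableOn (fun x => (v (Winv (Wfun v x + α)))⁻¹) (Ioi 0) :=
  ((antitoneOn_inv_Winv_Wfun_add hv hv0 hWinv hα).mono Ioi_subset_Ici_self)
    |>.integrableOn_of_lintegral_lt_top measurableSet_Ioi (fun _ _ => inv_nonneg.2 (hv0 _).le) hI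

lemma eventually_inv_le_inv_Winv_Wfun_add (hv : Monotone v) (hv0 : ∀ t, 0 < v t)
    (hWinv : ∀ y, 0 ≤ y → Wfun v (Winv y) = y) {α δ γ : ℝ} (hα : 0 ≤ α) (hαδ : 2 * α < δ)
    (hγ : 0 < γ) (hI : Ia v Winv α < ⊤) :
    ∀ᶠ n : ℕ in atTop,
      (v (γ * Winv (Wfun v n + δ)))⁻¹ ≤ (v (Winv (Wfun v n + α)))⁻¹ := by
  set g := fun x => (v (Winv (Wfun v x + α)))⁻¹
  set y := fun n : ℕ => Winv (Wfun v n + δ)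
  have hWy : ∀ n : ℕ, Wfun v (y n) = Wfun v n + δ := fun n =>
    hWinv _ (by linarith [Wfun_nonneg hv hv0 n.cast_nonneg])
  have hny : ∀ n : ℕ, (n : ℝ) ≤ y n := fun n =>
    (Wfun_strictMono hv hv0).le_iff_le.1 (by linarith [hWy n])
  have hz : Tendsto (fun n => γ * y n) atTop atTop :=
    tendsto_atTop_mono (fun n => mul_le_mul_of_nonneg_left (hny n) hγ.le)
      (tendsto_natCast_atTop_atTop.const_mul_atTop hγ)
  have hzg : Tendsto (fun x => x * g x) atTop (𝓝 0) :=
    ((antitoneOn_inv_Winv_Wfun_add hv hv0 hWinv hα).mono Ioi_subset_Ici_self)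
      |>.tendsto_mul_of_integrableOn_Ioi (fun _ _ => inv_nonneg.2 (hv0 _).le)
        (integrableOn_inv_Winv_Wfun_add hv hv0 hWinv hα hI)
  filter_upwards [(hzg.comp hz).eventually_lt_const (mul_pos hγ (sub_pos.2 hαδ))]
    with n hn
  have hy0 : 0 ≤ y n := n.cast_nonneg.trans (hny n)
  have hz0 : 0 ≤ γ * y n := mul_nonneg hγ.le hy0
  have hyg : y n * g (γ * y n) < δ - 2 * α :=
    lt_of_mul_lt_mul_left (by simpa only [Function.comp, mul_assoc] using hn) hγ.le
  have hW := Wfun_le_Wfun_add_add_div hv hv0 hWinv hα hy0 hz0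
  rw [div_eq_mul_inv] at hW
  exact inv_le_inv_Winv_Wfun_add hv hv0 hWinv hα n.cast_nonneg hz0 (by linarith [hWy n])

end Wfun

theorem stmt15_general (w : ℕ → ℝ) (hpos : ∀ n, 0 < w n) (hmono : Monotone w)
    (Winv : ℝ → ℝ)
    (hWinv' : ∀ y : ℝ, 0 ≤ y → Wfun (wext w) (Winv y) = y)
    (hzero : alphac (wext w) Winv = 0)
    (δ γ : ℝ) (hδ : 0 < δ) (hγ : 0 < γ) :
    Summable (fun n : ℕ => (wext w (γ * Winv (Wfun (wext w) n + δ)))⁻¹) := by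
  have hv := monotone_wext hmono
  have hv0 : ∀ t, 0 < wext w t := fun t => hpos _
  obtain ⟨α, hα, hαδ, hI⟩ := exists_Ia_lt_top_of_alphac_eq_zero hzero (half_pos hδ)
  have hsum : Summable fun n : ℕ => (wext w (Winv (Wfun (wext w) n + α)))⁻¹ :=
    (antitoneOn_inv_Winv_Wfun_add hv hv0 hWinv' hα.le).summable_of_integrableOn_Ioi_zero
      (integrableOn_inv_Winv_Wfun_add hv hv0 hWinv' hα.le hI)
      fun _ _ => inv_nonneg.2 (hv0 _).le
  refine hsum.of_norm_bounded_eventually_nat ?_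
  filter_upwards [eventually_inv_le_inv_Winv_Wfun_add (δ := δ) hv hv0 hWinv' hα.le
    (by linarith) hγ hI] with n hn
  rwa [Real.norm_of_nonneg (inv_nonneg.2 (hv0 _).le)]

/-- if `α_c(w) = 0`, then for any `δ, γ > 0`,
`∑ₙ 1/w(γ W⁻¹(W(n)+δ)) < ∞`. -/
theorem stmt15 (w : ℕ → ℝ) (hpos : ∀ n, 0 < w n) (hmono : Monotone w)
    (hdiv : ¬ Summable (fun n : ℕ => (w n)⁻¹))
    (Winv : ℝ → ℝ)
    (hWinv : ∀ t : ℝ, 0 ≤ t → Winv (Wfun (wext w) t) = t)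
    (hWinv' : ∀ y : ℝ, 0 ≤ y → Wfun (wext w) (Winv y) = y)
    (hzero : alphac (wext w) Winv = 0)
    (δ γ : ℝ) (hδ : 0 < δ) (hγ : 0 < γ) :
    Summable (fun n : ℕ => (wext w (γ * Winv (Wfun (wext w) n + δ)))⁻¹) :=
  stmt15_general w hpos hmono Winv hWinv' hzero δ γ hδ hγ
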